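/- arXiv:2404.18704 — 2 statements merged into one kernel-verified Lean document; each statement's English description precedes it below -/
import Mathlib

section
/- For a > 0 and τ > 0 with aτ < 1, the equation βτ = arctan(β/a) has a unique smallest positive root β* > 0, and β* satisfies 0 < β* < π/(2τ). -/
open Real

/-!
The function `f β = arctan (β / a) - β τ` is strictly concave on `[0, ∞)` and vanishes at `0`,
so it has at most one positive zero. Since `f' 0 = 1 / a - τ > 0`, `f` is positive just to the
right of `0`, while `f β ≥ 0` forces `β τ ≤ arctan (β / a) < π / 2`; in particular
`f (π / (2τ)) < 0`, and the intermediate value theorem yields the zero, below `π / (2τ)`.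
-/

theorem HasDerivAt.exists_gt_map_gt_of_pos {f : ℝ → ℝ} {f' x : ℝ} (hf : HasDerivAt f f' x)
    (hf' : 0 < f') : ∃ y, x < y ∧ f x < f y := by
  obtain ⟨t, hslope, ht⟩ :=
    ((hf.tendsto_slope_zero_right.eventually (lt_mem_nhds hf')).and self_mem_nhdsWithin).exists
  rw [smul_eq_mul] at hslope
  exact ⟨x + t, lt_add_of_pos_right x ht,
    sub_pos.mp (pos_of_mul_pos_right hslope (inv_nonneg.mpr (le_of_lt ht)))⟩

theorem StrictConcaveOn.eq_of_pos_of_map_eq_zero {g : ℝ → ℝ}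
    (hg : StrictConcaveOn ℝ (Set.Ici 0) g) (hg0 : g 0 = 0) {x y : ℝ} (hx : 0 < x) (hy : 0 < y)
    (hgx : g x = 0) (hgy : g y = 0) : x = y := by
  wlog hxy : x < y generalizing x y
  · rcases (not_lt.mp hxy).eq_or_lt with h | h
    · exact h.symm
    · exact (this hy hx hgy hgx h).symm
  -- `x` is a proper convex combination of the zeros `0` and `y`, so `g x > 0`.
  have hmid := hg.2 Set.self_mem_Ici (Set.mem_Ici.mpr hy.le) hy.ne
    (sub_pos.mpr ((div_lt_one hy).mpr hxy)) (div_pos hx hy) (sub_add_cancel 1 (x / y))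
  have hcomb : (1 - x / y) • (0 : ℝ) + (x / y) • y = x := by
    rw [smul_eq_mul, smul_eq_mul]
    field_simp
    ring
  rw [hcomb, hg0, hgx, hgy] at hmid
  simp at hmid

theorem lt_pi_div_two_div_of_mul_le_arctan {β τ y : ℝ} (hτ : 0 < τ) (h : β * τ ≤ arctan y) :
    β < π / (2 * τ) := by
  rw [lt_div_iff₀ (by positivity)]
  linarith [arctan_lt_pi_div_two y]

theorem hasDerivAt_arctan_div_sub_mul {a : ℝ} (ha : a ≠ 0) (τ x : ℝ) :
    HasDerivAt (fun β => arctan (β / a) - β * τ) (a / (a ^ 2 + x ^ 2) - τ) x := by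
  refine (((hasDerivAt_id' x).div_const a).arctan.sub
    ((hasDerivAt_id' x).mul_const τ)).congr_deriv ?_
  field_simp

theorem strictConcaveOn_arctan_div_sub_mul {a : ℝ} (ha : 0 < a) (τ : ℝ) :
    StrictConcaveOn ℝ (Set.Ici 0) (fun β => arctan (β / a) - β * τ) := by
  refine StrictAntiOn.strictConcaveOn_of_deriv (convex_Ici 0) (by fun_prop) ?_
  rw [interior_Ici]
  intro x (hx : 0 < x) y _ hxy
  simp only [(hasDerivAt_arctan_div_sub_mul ha.ne' τ _).deriv]
  gcongr

theorem stmt_5 (a τ : ℝ) (ha : 0 < a) (hτ : 0 < τ) (h1 : a * τ < 1) :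
    ∃! β : ℝ, 0 < β ∧ β * τ = Real.arctan (β / a) ∧
      (∀ β' : ℝ, 0 < β' → β' * τ = Real.arctan (β' / a) → β ≤ β') ∧
      β < Real.pi / (2 * τ) := by
  set f : ℝ → ℝ := fun β => arctan (β / a) - β * τ
  have hf0 : f 0 = 0 := by simp [f]
  have hf_eq_zero (β : ℝ) : f β = 0 ↔ β * τ = arctan (β / a) := sub_eq_zero.trans eq_comm
  have hf_nonneg (β : ℝ) (hβ : 0 ≤ f β) : β < π / (2 * τ) :=
    lt_pi_div_two_div_of_mul_le_arctan hτ (sub_nonneg.mp hβ)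
  have hf_unique {β β' : ℝ} : 0 < β → 0 < β' → f β = 0 → f β' = 0 → β = β' :=
    (strictConcaveOn_arctan_div_sub_mul ha τ).eq_of_pos_of_map_eq_zero hf0
  obtain ⟨x₀, hx₀, hfx₀⟩ : ∃ x₀, 0 < x₀ ∧ f 0 < f x₀ :=
    (hasDerivAt_arctan_div_sub_mul ha.ne' τ 0).exists_gt_map_gt_of_pos (by
      rw [sub_pos, lt_div_iff₀ (by positivity)]; nlinarith)
  have hfM : f (π / (2 * τ)) < 0 := not_le.mp fun h => (hf_nonneg _ h).false
  obtain ⟨β, hβ, hfβ⟩ := intermediate_value_Icc' (hf_nonneg x₀ (hf0 ▸ hfx₀.le)).le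
    (by fun_prop : Continuous f).continuousOn ⟨hfM.le, hf0 ▸ hfx₀.le⟩
  have hβ_pos : 0 < β := hx₀.trans_le hβ.1
  refine ⟨β, ⟨hβ_pos, (hf_eq_zero β).mp hfβ, fun β' hβ' hβ'_eq => ?_, hf_nonneg β hfβ.ge⟩,
    fun β' ⟨hβ', hβ'_eq, _⟩ => ?_⟩
  · exact (hf_unique hβ_pos hβ' hfβ ((hf_eq_zero β').mpr hβ'_eq)).le
  · exact hf_unique hβ' hβ_pos ((hf_eq_zero β').mpr hβ'_eq) hfβ
end

section
/- For every integer n ≥ 1, T > 0, and a > 0, the function θ(β) = n·arctan(βT/n) - arctan(β/a) satisfies: if aT < 1 and n ≥ 2, then there exists a smallest β* > 0 with θ(β*) = 0, and θ(β) < 0 for all 0 < β < β*. -/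
open Real

lemma arctan_le_self' {x : ℝ} (hx : 0 ≤ x) : Real.arctan x ≤ x := by
  rcases eq_or_lt_of_le hx with h | h
  · simp [← h]
  · have h1 : 0 < Real.arctan x := by simpa using Real.arctan_strictMono h
    have h2 : Real.arctan x < π / 2 := Real.arctan_lt_pi_div_two x
    have := Real.lt_tan h1 h2
    rw [Real.tan_arctan] at this
    exact this.le

lemma self_div_le_arctan {x : ℝ} (hx : 0 ≤ x) : x / (1 + x ^ 2) ≤ Real.arctan x := by
  have h0 : (0:ℝ) ≤ Real.arctan x := by simpa using Real.arctan_strictMono.monotone hx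
  have hs : Real.sin (Real.arctan x) ≤ Real.arctan x := Real.sin_le h0
  have hsin : Real.sin (Real.arctan x) = x / Real.sqrt (1 + x ^ 2) := Real.sin_arctan x
  have hcos : Real.cos (Real.arctan x) = 1 / Real.sqrt (1 + x ^ 2) := Real.cos_arctan x
  have hsq : (0:ℝ) < 1 + x ^ 2 := by positivity
  have hsqrt : 0 < Real.sqrt (1 + x ^ 2) := Real.sqrt_pos.2 hsq
  have hmul : Real.sqrt (1 + x ^ 2) * Real.sqrt (1 + x ^ 2) = 1 + x ^ 2 :=
    Real.mul_self_sqrt hsq.le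
  have hkey : x / (1 + x ^ 2) ≤ Real.sin (Real.arctan x) := by
    rw [hsin]
    rw [div_le_div_iff₀ hsq hsqrt]
    calc x * Real.sqrt (1 + x ^ 2) ≤ x * (1 + x ^ 2) := by
          apply mul_le_mul_of_nonneg_left _ hx
          nlinarith [Real.sq_sqrt hsq.le, Real.sqrt_nonneg (1 + x^2)]
      _ = x * (1 + x ^ 2) := rfl
  linarith

theorem stmt_12 (n : ℕ) (hn : 2 ≤ n) (T a : ℝ) (hT : 0 < T) (ha : 0 < a)
    (haT : a * T < 1)
    (θ : ℝ → ℝ)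
    (hθ : ∀ β, θ β = (n : ℝ) * Real.arctan (β * T / n) - Real.arctan (β / a)) :
    ∃ β' : ℝ, 0 < β' ∧ θ β' = 0 ∧
      (∀ β : ℝ, 0 < β → θ β = 0 → β' ≤ β) ∧
      (∀ β : ℝ, 0 < β → β < β' → θ β < 0) := by
  have hn0 : (0:ℝ) < n := by positivity
  have hcont : Continuous θ := by
    have : θ = fun β => (n : ℝ) * Real.arctan (β * T / n) - Real.arctan (β / a) :=
      funext hθ
    rw [this]
    exact (continuous_const.mul (Real.continuous_arctan.comp (by fun_prop))).sub
      (Real.continuous_arctan.comp (by fun_prop))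
  -- constant c and ε
  set c : ℝ := (1 - a * T) / (a * T) with hc
  have hcpos : 0 < c := by
    apply div_pos (by linarith) (by positivity)
  set ε : ℝ := a * Real.sqrt c / 2 with hε
  have hεpos : 0 < ε := by
    have := Real.sqrt_pos.2 hcpos
    positivity
  -- negativity for small β
  have hsmall : ∀ β : ℝ, 0 < β → β ≤ ε → θ β < 0 := by
    intro β hβ hβε
    rw [hθ]
    have h1 : (n : ℝ) * Real.arctan (β * T / n) ≤ β * T := by
      have := arctan_le_self' (x := β * T / n) (by positivity)
      calc (n : ℝ) * Real.arctan (β * T / n) ≤ (n : ℝ) * (β * T / n) :=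
            mul_le_mul_of_nonneg_left this hn0.le
        _ = β * T := by field_simp
    have y := β / a
    have hy : 0 < β / a := by positivity
    have h2 : (β / a) / (1 + (β / a) ^ 2) ≤ Real.arctan (β / a) :=
      self_div_le_arctan hy.le
    -- β*T < (β/a)/(1+(β/a)^2)
    have hylt : (β / a) ^ 2 < c := by
      have h3 : β / a ≤ Real.sqrt c / 2 := by
        rw [div_le_div_iff₀ ha two_pos]
        rw [hε] at hβε
        nlinarith [hβε]
      have h4 : (β / a) ^ 2 ≤ (Real.sqrt c / 2) ^ 2 := by
        apply sq_le_sq' _ h3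
        nlinarith [Real.sqrt_nonneg c]
      have h5 : (Real.sqrt c / 2) ^ 2 = c / 4 := by
        rw [div_pow, Real.sq_sqrt hcpos.le]; norm_num
      linarith [h4, h5.le, hcpos]
    have h6 : β * T < (β / a) / (1 + (β / a) ^ 2) := by
      rw [lt_div_iff₀ (by positivity)]
      have : a * T * (1 + (β / a) ^ 2) < 1 := by
        rw [hc] at hylt
        have haT0 : 0 < a * T := by positivity
        rw [lt_div_iff₀ haT0] at hylt
        nlinarith
      have hmul2 := mul_lt_mul_of_pos_left this hy
      calc β * T * (1 + (β / a) ^ 2) = β / a * (a * T * (1 + (β / a) ^ 2)) := by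
            field_simp
        _ < β / a * 1 := hmul2
        _ = β / a := mul_one _
    linarith
  -- positivity for large β
  set B : ℝ := max (ε + 1) (n / T + 1) with hB
  have hBε : ε < B := lt_of_lt_of_le (by linarith) (le_max_left _ _)
  have hBpos : 0 < B := lt_trans hεpos hBε
  have hbig : 0 < θ B := by
    rw [hθ]
    have h1 : (1:ℝ) < B * T / n := by
      have : n / T + 1 ≤ B := le_max_right _ _
      rw [lt_div_iff₀ hn0]
      calc (1:ℝ) * n = n := one_mul _
        _ < (n / T + 1) * T := by field_simp; nlinarith
        _ ≤ B * T := by nlinarith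
    have h2 : π / 4 < Real.arctan (B * T / n) := by
      rw [← Real.arctan_one]; exact Real.arctan_strictMono h1
    have h3 : (n:ℝ) * (π / 4) ≥ 2 * (π / 4) := by
      have : (2:ℝ) ≤ n := by exact_mod_cast hn
      nlinarith [Real.pi_pos]
    have h4 : Real.arctan (B / a) < π / 2 := Real.arctan_lt_pi_div_two _
    have h5 : (n:ℝ) * (π / 4) < (n:ℝ) * Real.arctan (B * T / n) :=
      (mul_lt_mul_iff_right₀ hn0).2 h2
    nlinarith [Real.pi_pos]
  -- root set
  set S : Set ℝ := {β | ε ≤ β ∧ θ β = 0} with hS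
  have hSclosed : IsClosed S := by
    have : S = {β | ε ≤ β} ∩ θ ⁻¹' {0} := by
      ext β; simp [hS, Set.mem_setOf_eq]
    rw [this]
    exact (isClosed_le continuous_const continuous_id).inter
      (isClosed_singleton.preimage hcont)
  have hSne : S.Nonempty := by
    have hεB : ε ≤ B := hBε.le
    have hivt := intermediate_value_Icc hεB hcont.continuousOn
    have h0mem : (0:ℝ) ∈ Set.Icc (θ ε) (θ B) :=
      ⟨(hsmall ε hεpos le_rfl).le, hbig.le⟩
    obtain ⟨x, hx, hθx⟩ := hivt h0mem
    exact ⟨x, hx.1, hθx⟩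
  have hSbdd : BddBelow S := ⟨ε, fun x hx => hx.1⟩
  have hmem : sInf S ∈ S := hSclosed.csInf_mem hSne hSbdd
  refine ⟨sInf S, lt_of_lt_of_le hεpos hmem.1, hmem.2, ?_, ?_⟩
  · intro β hβ hβ0
    have hβε : ε ≤ β := by
      by_contra h
      push_neg at h
      exact absurd hβ0 (hsmall β hβ h.le).ne
    exact csInf_le hSbdd ⟨hβε, hβ0⟩
  · intro β hβ hβlt
    rcases le_or_gt β ε with h | h
    · exact hsmall β hβ h
    · rcases lt_trichotomy (θ β) 0 with h1 | h1 | h1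
      · exact h1
      · exact absurd hβlt (not_lt.2 (csInf_le hSbdd ⟨h.le, h1⟩))
      · exfalso
        have hivt := intermediate_value_Icc h.le hcont.continuousOn
        have h0mem : (0:ℝ) ∈ Set.Icc (θ ε) (θ β) :=
          ⟨(hsmall ε hεpos le_rfl).le, h1.le⟩
        obtain ⟨x, hx, hθx⟩ := hivt h0mem
        have : sInf S ≤ x := csInf_le hSbdd ⟨hx.1, hθx⟩
        linarith [hx.2]
end
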